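/- arXiv:2604.23967 — 2 statements merged into one kernel-verified Lean document; each statement's English description precedes it below -/
import Mathlib

section
/- Every isomorphism φ: B₁ → B₂ between the induced partial algebras satisfies φ([t]_{Γ₁}) = [t]_{Γ₂} for every t ∈ B = C ∪ ST(Γ₁ ∪ Γ₂). In particular such an isomorphism, if it exists, is unique. -/
namespace AFA

open Classical

/-- A functional signature: operation symbols with arities. Constants are arity-0 symbols. -/
structure Sig where
  Op : Type
  arity : Op → ℕ

/-- Ground terms over a signature. -/
inductive Tm (S : Sig) : Type
  | node (f : S.Op) (args : Fin (S.arity f) → Tm S) : Tm S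

/-- The ground term given by a constant symbol. -/
def constTm (S : Sig) (c : S.Op) (h : S.arity c = 0) : Tm S :=
  Tm.node c (fun i => absurd i.isLt (by omega))

/-- Height of a ground term (constants have height 0). -/
def Tm.height {S : Sig} : Tm S → ℕ
  | Tm.node _ a => Finset.univ.sup fun i => (a i).height + 1

/-- The i-th immediate subterm (child of the root of the syntax tree), if it exists. -/
def Tm.child {S : Sig} : Tm S → ℕ → Option (Tm S)
  | Tm.node f a, i => if h : i < S.arity f then some (a ⟨i, h⟩) else none

/-- A total algebra over the signature `S`. -/
structure Alg (S : Sig) where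
  carrier : Type
  op : (f : S.Op) → (Fin (S.arity f) → carrier) → carrier

/-- Homomorphism of total algebras. -/
structure Hom {S : Sig} (A B : Alg S) where
  toFun : A.carrier → B.carrier
  map : ∀ (f : S.Op) (a : Fin (S.arity f) → A.carrier),
    toFun (A.op f a) = B.op f (fun i => toFun (a i))

/-- Evaluation of a ground term in an algebra. -/
def Tm.eval {S : Sig} (A : Alg S) : Tm S → A.carrier
  | Tm.node f a => A.op f (fun i => (a i).eval A)

/-- An algebra is generated by the constants iff every element is the value of a ground term. -/
def GeneratedAlg {S : Sig} (A : Alg S) : Prop :=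
  ∀ x : A.carrier, ∃ t : Tm S, t.eval A = x

/-- Isomorphism of total algebras. -/
def AlgIso {S : Sig} (A B : Alg S) : Prop :=
  ∃ h : Hom A B, Function.Bijective h.toFun

/-- Derivability in equational logic from a set `Γ` of ground equations:
the smallest congruence containing `Γ`. `Thm Γ p q` means `Γ ⊢ p = q`. -/
inductive Thm {S : Sig} (Γ : Set (Tm S × Tm S)) : Tm S → Tm S → Prop
  | ax {p q : Tm S} : (p, q) ∈ Γ → Thm Γ p q
  | refl (t : Tm S) : Thm Γ t t
  | symm {p q : Tm S} : Thm Γ p q → Thm Γ q p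
  | trans {p q r : Tm S} : Thm Γ p q → Thm Γ q r → Thm Γ p r
  | congr {f : S.Op} {a b : Fin (S.arity f) → Tm S} :
      (∀ i, Thm Γ (a i) (b i)) → Thm Γ (Tm.node f a) (Tm.node f b)

/-- The setoid `∼_Γ` on ground terms. -/
def thmSetoid {S : Sig} (Γ : Set (Tm S × Tm S)) : Setoid (Tm S) :=
  ⟨Thm Γ, ⟨fun t => Thm.refl t, fun h => Thm.symm h, fun h₁ h₂ => Thm.trans h₁ h₂⟩⟩

/-- The quotient algebra `F_Γ = F/∼_Γ`. -/
noncomputable def FGamma {S : Sig} (Γ : Set (Tm S × Tm S)) : Alg S where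
  carrier := Quotient (thmSetoid Γ)
  op f a := Quotient.mk (thmSetoid Γ) (Tm.node f (fun i => (a i).out))

/-- Single-step ground rewriting: replace a subterm which is one side of an
equation of `Γ` by the other side. -/
inductive Step {S : Sig} (Γ : Set (Tm S × Tm S)) : Tm S → Tm S → Prop
  | here {p q : Tm S} : (p, q) ∈ Γ ∨ (q, p) ∈ Γ → Step Γ p q
  | sub {f : S.Op} {a b : Fin (S.arity f) → Tm S} (i : Fin (S.arity f)) :
      Step Γ (a i) (b i) → (∀ j, j ≠ i → a j = b j) → Step Γ (Tm.node f a) (Tm.node f b)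

/-- Subterm relation on ground terms. -/
inductive Subterm {S : Sig} : Tm S → Tm S → Prop
  | refl (t : Tm S) : Subterm t t
  | step {s : Tm S} {f : S.Op} {a : Fin (S.arity f) → Tm S} (i : Fin (S.arity f)) :
      Subterm s (a i) → Subterm s (Tm.node f a)

/-- `p` occurs in `Γ` (is one side of an equation of `Γ`). -/
def SideOf {S : Sig} (Γ : Set (Tm S × Tm S)) (p : Tm S) : Prop :=
  ∃ e ∈ Γ, p = e.1 ∨ p = e.2

/-- `ST Γ`: all subterms of terms occurring in `Γ`. -/
def ST {S : Sig} (Γ : Set (Tm S × Tm S)) : Set (Tm S) :=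
  {t | ∃ e ∈ Γ, Subterm t e.1 ∨ Subterm t e.2}

/-- A term "has a type" if it is `∼_Γ`-equivalent to a term mentioned in `Γ`. -/
def HasType {S : Sig} (Γ : Set (Tm S × Tm S)) (t : Tm S) : Prop :=
  ∃ p, SideOf Γ p ∧ Thm Γ t p

/-- `w` is an immediate subterm of `u`. -/
def ImmSub {S : Sig} (w u : Tm S) : Prop :=
  ∃ (f : S.Op) (a : Fin (S.arity f) → Tm S) (i : Fin (S.arity f)), u = Tm.node f a ∧ a i = w

/-- Edge relation of the quotient graph `R̂_Γ`: there is a directed edge from the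
class of `u` to the class of `w` iff some `Γ`-subterm-occurrence `u'` equivalent to `u`
has an immediate subterm `w'` equivalent to `w`. -/
def EdgeHat {S : Sig} (Γ : Set (Tm S × Tm S)) (u w : Tm S) : Prop :=
  ∃ u' w', u' ∈ ST Γ ∧ w' ∈ ST Γ ∧ Thm Γ u u' ∧ Thm Γ w w' ∧ ImmSub w' u'

/-- A directed cycle of `R̂_Γ` is reachable from (the class of) `t` by a directed path. -/
def CyclicFrom {S : Sig} (Γ : Set (Tm S × Tm S)) (t : Tm S) : Prop :=
  ∃ u, Relation.ReflTransGen (EdgeHat Γ) t u ∧ Relation.TransGen (EdgeHat Γ) u u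

/-- `t` is of cyclic type: `t` is `∼_Γ`-equivalent to a term mentioned in `Γ`
whose type is cyclic. -/
def OfCyclicType {S : Sig} (Γ : Set (Tm S × Tm S)) (t : Tm S) : Prop :=
  ∃ p, SideOf Γ p ∧ Thm Γ t p ∧ CyclicFrom Γ p

/-- The canonical representative map: given a choice function `r` assigning to each
typed term the fixed representative of its type, replace each maximal typed subterm
of `t` by the chosen representative. -/
noncomputable def repMap {S : Sig} (Γ : Set (Tm S × Tm S)) (r : Tm S → Tm S) : Tm S → Tm S
  | Tm.node f a =>
      if HasType Γ (Tm.node f a) then r (Tm.node f a)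
      else Tm.node f fun i => repMap Γ r (a i)

/-- A partial algebra over `S`. -/
structure PAlg (S : Sig) where
  carrier : Type
  pop : (f : S.Op) → (Fin (S.arity f) → carrier) → Option carrier

/-- An embedding exhibiting the partial algebra `B` as a substructure of the
total algebra `A`. -/
structure PEmb {S : Sig} (B : PAlg S) (A : Alg S) where
  toFun : B.carrier → A.carrier
  inj : Function.Injective toFun
  map : ∀ (f : S.Op) (b : Fin (S.arity f) → B.carrier) (c : B.carrier),
    B.pop f b = some c → A.op f (fun i => toFun (b i)) = toFun c

/-- `A` is free over the partial algebra `B` (via the substructure embedding `e`):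
every (constant-generated) algebra containing `B` as a substructure is a homomorphic
image of `A` via a homomorphism fixing `B` pointwise. -/
def IsFreeOver {S : Sig} (A : Alg S) (B : PAlg S) (e : PEmb B A) : Prop :=
  ∀ (C : Alg S), GeneratedAlg C → ∀ e' : PEmb B C,
    ∃ h : Hom A C, Function.Surjective h.toFun ∧ ∀ b, h.toFun (e.toFun b) = e'.toFun b

/-- Elements of a partial algebra generated from constants via the defined operations. -/
inductive PGen {S : Sig} (B : PAlg S) : B.carrier → Prop
  | op {f : S.Op} {b : Fin (S.arity f) → B.carrier} {c : B.carrier} :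
      (∀ i, PGen B (b i)) → B.pop f b = some c → PGen B c

/-- A partial algebra is generated by the constants. -/
def PGenerated {S : Sig} (B : PAlg S) : Prop := ∀ x, PGen B x

/-- Raw `B`-terms: terms built over elements of the partial algebra `B`. -/
inductive BTm {S : Sig} (B : PAlg S) : Type
  | base (b : B.carrier) : BTm B
  | app (f : S.Op) (args : Fin (S.arity f) → BTm B) : BTm B

/-- Normal `B`-terms: an application node is allowed only when it cannot be
evaluated in `B`. -/
inductive Normal {S : Sig} {B : PAlg S} : BTm B → Prop
  | base (b : B.carrier) : Normal (BTm.base b)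
  | app {f : S.Op} {args : Fin (S.arity f) → BTm B} :
      (∀ i, Normal (args i)) →
      ¬(∃ (b : Fin (S.arity f) → B.carrier) (c : B.carrier),
          (∀ i, args i = BTm.base (b i)) ∧ B.pop f b = some c) →
      Normal (BTm.app f args)

/-- The free total extension `F(B)` of the partial algebra `B`: its elements are
the normal `B`-terms; an operation evaluates in `B` whenever possible, and forms
a formal term otherwise. -/
noncomputable def FB {S : Sig} (B : PAlg S) : Alg S where
  carrier := {t : BTm B // Normal t}
  op f args :=
    if h : ∃ (b : Fin (S.arity f) → B.carrier) (c : B.carrier),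
        (∀ i, (args i).1 = BTm.base (b i)) ∧ B.pop f b = some c
    then ⟨BTm.base h.choose_spec.choose, Normal.base _⟩
    else ⟨BTm.app f (fun i => (args i).1), Normal.app (fun i => (args i).2) h⟩

/-- The canonical inclusion of `B` into `F(B)`. -/
def embB {S : Sig} (B : PAlg S) (b : B.carrier) : (FB B).carrier :=
  ⟨BTm.base b, Normal.base b⟩

/-- Terms with variables. -/
inductive TmV (S : Sig) : Type
  | var (n : ℕ) : TmV S
  | node (f : S.Op) (args : Fin (S.arity f) → TmV S) : TmV S

/-- Ground substitution into a term with variables. -/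
def TmV.substG {S : Sig} (ρ : ℕ → Tm S) : TmV S → Tm S
  | TmV.var n => ρ n
  | TmV.node f a => Tm.node f (fun i => (a i).substG ρ)

/-- Evaluation of a term with variables under an assignment. -/
def TmV.evalV {S : Sig} (A : Alg S) (ρ : ℕ → A.carrier) : TmV S → A.carrier
  | TmV.var n => ρ n
  | TmV.node f a => A.op f (fun i => (a i).evalV A ρ)

/-- All ground instances of a set of (possibly non-ground) equations. -/
def GroundInstances {S : Sig} (Γ : Set (TmV S × TmV S)) : Set (Tm S × Tm S) :=
  {pq | ∃ e ∈ Γ, ∃ ρ : ℕ → Tm S, pq.1 = e.1.substG ρ ∧ pq.2 = e.2.substG ρ}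

/-- `A ⊨ Γ` for a set of (possibly non-ground) equations. -/
def SatV {S : Sig} (A : Alg S) (Γ : Set (TmV S × TmV S)) : Prop :=
  ∀ e ∈ Γ, ∀ ρ : ℕ → A.carrier, TmV.evalV A ρ e.1 = TmV.evalV A ρ e.2

/-- The finite partial algebra of `∼_Γ`-classes containing a term of height `≤ N`. -/
noncomputable def heightPAlg {S : Sig} (Γ : Set (Tm S × Tm S)) (N : ℕ) : PAlg S where
  carrier := {x : Quotient (thmSetoid Γ) //
    ∃ t : Tm S, t.height ≤ N ∧ Quotient.mk (thmSetoid Γ) t = x}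
  pop f b :=
    if h : ∃ t : Tm S, t.height ≤ N ∧
        Quotient.mk (thmSetoid Γ) t =
          Quotient.mk (thmSetoid Γ) (Tm.node f (fun i => (b i).1.out))
    then some ⟨Quotient.mk (thmSetoid Γ) (Tm.node f (fun i => (b i).1.out)), h⟩
    else none

/-- The set `B = C ∪ ST(Γ₁ ∪ Γ₂)`. -/
def BSet {S : Sig} (Γ₁ Γ₂ : Set (Tm S × Tm S)) : Set (Tm S) :=
  {t | (∃ (c : S.Op) (h : S.arity c = 0), t = constTm S c h) ∨ t ∈ ST (Γ₁ ∪ Γ₂)}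

/-- The partial algebra induced by `Γ` on the `∼_Γ`-classes of terms of `Bs`:
`f` applied to classes is defined iff the class of the resulting term again
contains a term of `Bs`. -/
noncomputable def BAlg {S : Sig} (Γ : Set (Tm S × Tm S)) (Bs : Set (Tm S)) : PAlg S where
  carrier := Quotient (Setoid.comap (Subtype.val : Bs → Tm S) (thmSetoid Γ))
  pop f b :=
    if h : ∃ u : Bs, Thm Γ u.1 (Tm.node f (fun i => ((b i).out).1))
    then some (Quotient.mk (Setoid.comap (Subtype.val : Bs → Tm S) (thmSetoid Γ)) h.choose)
    else none

/-- The class of `t ∈ Bs` as an element of `BAlg Γ Bs`. -/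
noncomputable def BAlgMk {S : Sig} (Γ : Set (Tm S × Tm S)) (Bs : Set (Tm S))
    (t : Tm S) (ht : t ∈ Bs) : (BAlg Γ Bs).carrier :=
  Quotient.mk (Setoid.comap (Subtype.val : Bs → Tm S) (thmSetoid Γ)) ⟨t, ht⟩

/-- Isomorphism of partial algebras: a bijection preserving definedness and
values of the partial operations in both directions. -/
def PIso {S : Sig} (B₁ B₂ : PAlg S) : Prop :=
  ∃ e : B₁.carrier ≃ B₂.carrier,
    ∀ (f : S.Op) (b : Fin (S.arity f) → B₁.carrier),
      Option.map e (B₁.pop f b) = B₂.pop f (fun i => e (b i))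

/-- The algebra structure on `∼_Γ`-classes of `ST(Γ)`, defined via the closure
hypothesis `hf`. -/
noncomputable def STAlg {S : Sig} (Γ : Set (Tm S × Tm S))
    (hf : ∀ (f : S.Op) (a : Fin (S.arity f) → Tm S), (∀ i, a i ∈ ST Γ) →
      ∃ u ∈ ST Γ, Thm Γ (Tm.node f a) u) : Alg S where
  carrier := Quotient (Setoid.comap (Subtype.val : ST Γ → Tm S) (thmSetoid Γ))
  op f a :=
    let h := hf f (fun i => ((a i).out).1) (fun i => ((a i).out).2)
    Quotient.mk (Setoid.comap (Subtype.val : ST Γ → Tm S) (thmSetoid Γ))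
      ⟨h.choose, h.choose_spec.1⟩

/-- The map `φ : F → ST(Γ)` defined inductively by choosing, at each application,
a `∼_Γ`-equivalent member of `ST(Γ)`. -/
noncomputable def phiST {S : Sig} (Γ : Set (Tm S × Tm S))
    (hf : ∀ (f : S.Op) (a : Fin (S.arity f) → Tm S), (∀ i, a i ∈ ST Γ) →
      ∃ u ∈ ST Γ, Thm Γ (Tm.node f a) u) : Tm S → {u : Tm S // u ∈ ST Γ}
  | Tm.node f a =>
      let ih := fun i => phiST Γ hf (a i)
      let h := hf f (fun i => (ih i).1) (fun i => (ih i).2)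
      ⟨h.choose, h.choose_spec.1⟩

/-- The tester predicate `Is_f` on `F(B)`: holds of `a` iff `a ∉ B` and `a` is a
formal term with head symbol `f`. -/
def IsTester {S : Sig} {B : PAlg S} (f : S.Op) (a : (FB B).carrier) : Prop :=
  ∃ args : Fin (S.arity f) → BTm B, a.1 = BTm.app f args


/-!
`B` is closed under taking arguments, so for `f t₁ … tₖ ∈ B` the partial operation
`f([t₁], …, [tₖ])` is defined in both `B₁` and `B₂`, with value `[f t₁ … tₖ]`. An isomorphism
preserves these defined values, so induction on `t` gives `φ [t]_{Γ₁} = [t]_{Γ₂}`; as the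
classes `[t]_{Γ₁}` exhaust `B₁`, this determines `φ`.
-/

theorem Subterm.trans {S : Sig} {a b c : Tm S} (hab : Subterm a b) (hbc : Subterm b c) :
    Subterm a c := by
  induction hbc with
  | refl => exact hab
  | step i _ ih => exact Subterm.step i ih

theorem ST.arg_mem {S : Sig} {Γ : Set (Tm S × Tm S)} {f : S.Op} {a : Fin (S.arity f) → Tm S}
    (h : Tm.node f a ∈ ST Γ) (i : Fin (S.arity f)) : a i ∈ ST Γ := by
  obtain ⟨p, hp, hsub⟩ := h
  have hi : Subterm (a i) (Tm.node f a) := Subterm.step i (Subterm.refl _)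
  exact ⟨p, hp, hsub.imp hi.trans hi.trans⟩

def ArgClosed {S : Sig} (Bs : Set (Tm S)) : Prop :=
  ∀ (f : S.Op) (a : Fin (S.arity f) → Tm S), Tm.node f a ∈ Bs → ∀ i, a i ∈ Bs

theorem BSet.argClosed {S : Sig} (Γ₁ Γ₂ : Set (Tm S × Tm S)) : ArgClosed (BSet Γ₁ Γ₂) := by
  intro f a h i
  rcases h with ⟨c, hc, hconst⟩ | hST
  · obtain ⟨rfl, -⟩ := Tm.node.inj hconst
    exact absurd i.isLt (by omega)
  · exact Or.inr (ST.arg_mem hST i)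

section BAlg

variable {S : Sig} (Γ : Set (Tm S × Tm S)) (Bs : Set (Tm S))

theorem BAlgMk_out_thm (t : Tm S) (ht : t ∈ Bs) : Thm Γ (BAlgMk Γ Bs t ht).out.1 t :=
  Quotient.exact (Quotient.out_eq (BAlgMk Γ Bs t ht))

theorem BAlg.pop_mk (f : S.Op) (a : Fin (S.arity f) → Tm S) (ha : ∀ i, a i ∈ Bs)
    (h : Tm.node f a ∈ Bs) :
    (BAlg Γ Bs).pop f (fun i => BAlgMk Γ Bs (a i) (ha i)) =
      some (BAlgMk Γ Bs (Tm.node f a) h) := by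
  have hargs := fun i => BAlgMk_out_thm Γ Bs (a i) (ha i)
  have hdef : ∃ u : Bs, Thm Γ u.1 (Tm.node f fun i => (BAlgMk Γ Bs (a i) (ha i)).out.1) :=
    ⟨⟨Tm.node f a, h⟩, Thm.congr fun i => (hargs i).symm⟩
  simp only [BAlg, dif_pos hdef]
  exact congrArg some (Quotient.sound (hdef.choose_spec.trans (Thm.congr hargs)))

variable {Γ₁ Γ₂ : Set (Tm S × Tm S)} {Bs}

theorem BAlg.iso_apply_mk (hBs : ArgClosed Bs)
    (e : (BAlg Γ₁ Bs).carrier ≃ (BAlg Γ₂ Bs).carrier)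
    (he : ∀ (f : S.Op) (b : Fin (S.arity f) → (BAlg Γ₁ Bs).carrier),
      Option.map e ((BAlg Γ₁ Bs).pop f b) = (BAlg Γ₂ Bs).pop f (fun i => e (b i)))
    (t : Tm S) (ht : t ∈ Bs) : e (BAlgMk Γ₁ Bs t ht) = BAlgMk Γ₂ Bs t ht := by
  induction t with
  | node f a ih =>
    have ha := hBs f a ht
    have hpop := he f fun i => BAlgMk Γ₁ Bs (a i) (ha i)
    have hargs : (fun i => e (BAlgMk Γ₁ Bs (a i) (ha i))) = fun i => BAlgMk Γ₂ Bs (a i) (ha i) :=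
      funext fun i => ih i (ha i)
    rw [BAlg.pop_mk _ _ f a ha ht, hargs, BAlg.pop_mk _ _ f a ha ht] at hpop
    exact Option.some.inj hpop

theorem BAlg.iso_unique (hBs : ArgClosed Bs)
    (e e' : (BAlg Γ₁ Bs).carrier ≃ (BAlg Γ₂ Bs).carrier)
    (he : ∀ (f : S.Op) (b : Fin (S.arity f) → (BAlg Γ₁ Bs).carrier),
      Option.map e ((BAlg Γ₁ Bs).pop f b) = (BAlg Γ₂ Bs).pop f (fun i => e (b i)))
    (he' : ∀ (f : S.Op) (b : Fin (S.arity f) → (BAlg Γ₁ Bs).carrier),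
      Option.map e' ((BAlg Γ₁ Bs).pop f b) = (BAlg Γ₂ Bs).pop f (fun i => e' (b i))) :
    e = e' := by
  ext x
  induction x using Quotient.inductionOn with
  | h t =>
    exact (iso_apply_mk hBs e he t.1 t.2).trans (iso_apply_mk hBs e' he' t.1 t.2).symm

end BAlg

theorem stmt16_general (S : Sig) (Γ₁ Γ₂ : Set (Tm S × Tm S))
    (e : (BAlg Γ₁ (BSet Γ₁ Γ₂)).carrier ≃ (BAlg Γ₂ (BSet Γ₁ Γ₂)).carrier)
    (he : ∀ (f : S.Op) (b : Fin (S.arity f) → (BAlg Γ₁ (BSet Γ₁ Γ₂)).carrier),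
      Option.map e ((BAlg Γ₁ (BSet Γ₁ Γ₂)).pop f b) =
        (BAlg Γ₂ (BSet Γ₁ Γ₂)).pop f (fun i => e (b i))) :
    (∀ (t : Tm S) (ht : t ∈ BSet Γ₁ Γ₂),
        e (BAlgMk Γ₁ (BSet Γ₁ Γ₂) t ht) = BAlgMk Γ₂ (BSet Γ₁ Γ₂) t ht) ∧
    (∀ e₂ : (BAlg Γ₁ (BSet Γ₁ Γ₂)).carrier ≃ (BAlg Γ₂ (BSet Γ₁ Γ₂)).carrier,
      (∀ (f : S.Op) (b : Fin (S.arity f) → (BAlg Γ₁ (BSet Γ₁ Γ₂)).carrier),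
        Option.map e₂ ((BAlg Γ₁ (BSet Γ₁ Γ₂)).pop f b) =
          (BAlg Γ₂ (BSet Γ₁ Γ₂)).pop f (fun i => e₂ (b i))) → e = e₂) :=
  ⟨BAlg.iso_apply_mk (BSet.argClosed Γ₁ Γ₂) e he,
    fun e₂ he₂ => BAlg.iso_unique (BSet.argClosed Γ₁ Γ₂) e e₂ he he₂⟩

/-- Every isomorphism `φ : B₁ → B₂` of the induced partial algebras
satisfies `φ([t]_{Γ₁}) = [t]_{Γ₂}` for all `t ∈ B = C ∪ ST(Γ₁ ∪ Γ₂)`; in particular,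
such an isomorphism, if it exists, is unique. -/
theorem stmt16 (S : Sig) [Fintype S.Op] (Γ₁ Γ₂ : Set (Tm S × Tm S))
    (h₁ : Γ₁.Finite) (h₂ : Γ₂.Finite)
    (e : (BAlg Γ₁ (BSet Γ₁ Γ₂)).carrier ≃ (BAlg Γ₂ (BSet Γ₁ Γ₂)).carrier)
    (he : ∀ (f : S.Op) (b : Fin (S.arity f) → (BAlg Γ₁ (BSet Γ₁ Γ₂)).carrier),
      Option.map e ((BAlg Γ₁ (BSet Γ₁ Γ₂)).pop f b) =
        (BAlg Γ₂ (BSet Γ₁ Γ₂)).pop f (fun i => e (b i))) :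
    (∀ (t : Tm S) (ht : t ∈ BSet Γ₁ Γ₂),
        e (BAlgMk Γ₁ (BSet Γ₁ Γ₂) t ht) = BAlgMk Γ₂ (BSet Γ₁ Γ₂) t ht) ∧
    (∀ e₂ : (BAlg Γ₁ (BSet Γ₁ Γ₂)).carrier ≃ (BAlg Γ₂ (BSet Γ₁ Γ₂)).carrier,
      (∀ (f : S.Op) (b : Fin (S.arity f) → (BAlg Γ₁ (BSet Γ₁ Γ₂)).carrier),
        Option.map e₂ ((BAlg Γ₁ (BSet Γ₁ Γ₂)).pop f b) =
          (BAlg Γ₂ (BSet Γ₁ Γ₂)).pop f (fun i => e₂ (b i))) → e = e₂) :=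
  stmt16_general S Γ₁ Γ₂ e he

end AFA
end

section
/- Let Σ be a finite signature consisting of a single unary function symbol and finitely many constants. Then every algebra over Σ generated by its constants is an initial algebra, i.e., is isomorphic to F_Γ for some finite set Γ of (possibly non-ground) equations. -/
namespace AFA

open Classical

/-! Every ground term is `f^n(c)` for a constant `c`. In `A` the orbit of a constant under `f` is
either injective or eventually periodic, and an injective orbit meets any other orbit only along a
single diagonal `i - j = const`. Choose `N` beyond a meeting point of every pair of meeting orbits
and beyond a repetition of every periodic orbit. Then the ground equations valid in `A` between
terms of height `< N` derive every valid equation: a periodic orbit folds back below `N`, and a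
coincidence `f^i(c) = f^j(d)` with `c` of injective orbit is `f^k` applied to one below `N`. -/

open Function

variable {S : Sig}

def Tm.toTmV : Tm S → TmV S
  | Tm.node f a => TmV.node f fun i => (a i).toTmV

@[simp]
lemma Tm.substG_toTmV (ρ : ℕ → Tm S) (t : Tm S) : t.toTmV.substG ρ = t := by
  induction t with
  | node f a ih => simp only [Tm.toTmV, TmV.substG, ih]

lemma groundInstances_image_toTmV (Γ : Set (Tm S × Tm S)) :
    GroundInstances (Prod.map Tm.toTmV Tm.toTmV '' Γ) = Γ := by
  ext ⟨p, q⟩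
  constructor
  · rintro ⟨_, ⟨e, he, rfl⟩, ρ, rfl, rfl⟩
    simpa using he
  · exact fun h => ⟨_, ⟨_, h, rfl⟩, fun _ => p, by simp, by simp⟩

lemma Thm.eval_eq {A : Alg S} {Γ : Set (Tm S × Tm S)}
    (hΓ : ∀ e ∈ Γ, e.1.eval A = e.2.eval A) {p q : Tm S} (h : Thm Γ p q) :
    p.eval A = q.eval A := by
  induction h with
  | ax h => exact hΓ _ h
  | refl => rfl
  | symm _ ih => exact ih.symm
  | trans _ _ ih₁ ih₂ => exact ih₁.trans ih₂
  | congr _ ih => exact congrArg (A.op _) (funext ih)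

noncomputable def FGamma.evalHom (A : Alg S) {Γ : Set (Tm S × Tm S)}
    (hΓ : ∀ e ∈ Γ, e.1.eval A = e.2.eval A) : Hom (FGamma Γ) A where
  toFun := Quotient.lift (Tm.eval A) fun _ _ => Thm.eval_eq hΓ
  map f a := by
    show A.op f _ = A.op f _
    congr 1
    funext i
    conv_rhs => rw [← Quotient.out_eq (a i)]
    rfl

lemma algIso_of_bijective {A B : Alg S} (h : Hom B A) (hb : Bijective h.toFun) :
    AlgIso A B := by
  let e := Equiv.ofBijective _ hb
  refine ⟨⟨e.symm, fun f a => e.injective ?_⟩, e.symm.bijective⟩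
  simp [e, h.map, Equiv.ofBijective_apply_symm_apply]

theorem algIso_fGamma {A : Alg S} (hA : GeneratedAlg A) {Γ : Set (Tm S × Tm S)}
    (hΓ : ∀ p q, Thm Γ p q ↔ p.eval A = q.eval A) : AlgIso A (FGamma Γ) := by
  refine algIso_of_bijective (FGamma.evalHom A fun e he => (hΓ _ _).1 (Thm.ax he)) ⟨?_, ?_⟩
  · rintro ⟨p⟩ ⟨q⟩ h
    exact Quotient.sound ((hΓ p q).2 h)
  · intro x
    obtain ⟨t, rfl⟩ := hA x
    exact ⟨⟦t⟧, rfl⟩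

lemma Tm.finite_height_lt [Finite S.Op] : ∀ N, {t : Tm S | t.height < N}.Finite
  | 0 => by simp
  | N + 1 => by
    have := (Tm.finite_height_lt N).to_subtype
    refine (Set.finite_range fun x : (Σ f : S.Op, Fin (S.arity f) → {t : Tm S | t.height < N}) =>
      Tm.node x.1 fun i => (x.2 i).1).subset ?_
    rintro ⟨f, a⟩ h
    refine ⟨⟨f, fun i => ⟨a i, ?_⟩⟩, rfl⟩
    have := Finset.le_sup (f := fun i => (a i).height + 1) (Finset.mem_univ i)
    simp only [Set.mem_ofPred_eq, Tm.height] at h ⊢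
    omega

def validEqs (A : Alg S) (N : ℕ) : Set (Tm S × Tm S) :=
  {e | e.1.height < N ∧ e.2.height < N ∧ e.1.eval A = e.2.eval A}

lemma validEqs_finite [Finite S.Op] (A : Alg S) (N : ℕ) : (validEqs A N).Finite :=
  ((Tm.finite_height_lt N).prod (Tm.finite_height_lt N)).subset fun _ he => ⟨he.1, he.2.1⟩

lemma exists_witness_bound_of_finite {ι : Type*} [Finite ι] (Q : ι → ℕ → ℕ → Prop) :
    ∃ N, ∀ i a b, Q i a b → ∃ a' < N, ∃ b' < N, Q i a' b' := by
  have : ∀ i, ∃ n, ∀ a b, Q i a b → ∃ a' < n, ∃ b' < n, Q i a' b' := fun i => by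
    by_cases h : ∃ a b, Q i a b
    · obtain ⟨a, b, hab⟩ := h
      exact ⟨a + b + 1, fun _ _ _ => ⟨a, by omega, b, by omega, hab⟩⟩
    · exact ⟨0, fun a b hab => (h ⟨a, b, hab⟩).elim⟩
  choose n hn using this
  obtain ⟨N, hN⟩ := (Set.finite_range n).bddAbove
  refine ⟨N, fun i a b hab => ?_⟩
  obtain ⟨a', ha', b', hb', h⟩ := hn i a b hab
  exact ⟨a', ha'.trans_le (hN ⟨i, rfl⟩), b', hb'.trans_le (hN ⟨i, rfl⟩), h⟩

lemma add_eq_add_of_iterate_eq {α : Type*} {g : α → α} {x y : α}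
    (hx : Injective fun n => g^[n] x) {a b a' b' : ℕ}
    (h : g^[a] x = g^[b] y) (h' : g^[a'] x = g^[b'] y) : a + b' = a' + b := by
  have : g^[b' + a] x = g^[b + a'] x := calc
    g^[b' + a] x = g^[b' + b] y := by rw [iterate_add_apply, h, ← iterate_add_apply]
    _ = g^[b + b'] y := by rw [add_comm]
    _ = g^[b + a'] x := by rw [iterate_add_apply, ← h', ← iterate_add_apply]
  have := hx this
  omega

def Tm.unary (f : S.Op) (t : Tm S) : Tm S := Tm.node f fun _ => t

def Alg.unary (A : Alg S) (f : S.Op) (x : A.carrier) : A.carrier := A.op f fun _ => x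

lemma Tm.eval_iterate_unary (A : Alg S) (f : S.Op) (n : ℕ) (t : Tm S) :
    ((Tm.unary f)^[n] t).eval A = (A.unary f)^[n] (t.eval A) :=
  Semiconj.iterate_right (f := Tm.eval A) (fun _ => rfl) n t

lemma Thm.iterate_unary {Γ : Set (Tm S × Tm S)} {f : S.Op} {p q : Tm S} (h : Thm Γ p q)
    (n : ℕ) : Thm Γ ((Tm.unary f)^[n] p) ((Tm.unary f)^[n] q) := by
  induction n with
  | zero => exact h
  | succ n ih =>
    rw [iterate_succ_apply', iterate_succ_apply']
    exact Thm.congr fun _ => ih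

lemma Thm.exists_iterate_unary_lt {Γ : Set (Tm S × Tm S)} {f : S.Op} {t : Tm S} {a b : ℕ}
    (hba : b < a) (h : Thm Γ ((Tm.unary f)^[a] t) ((Tm.unary f)^[b] t)) (n : ℕ) :
    ∃ n' < a, Thm Γ ((Tm.unary f)^[n] t) ((Tm.unary f)^[n'] t) := by
  induction n using Nat.strong_induction_on with
  | _ n ih =>
    by_cases hn : n < a
    · exact ⟨n, hn, Thm.refl _⟩
    obtain ⟨k, rfl⟩ : ∃ k, n = k + a := ⟨n - a, by omega⟩
    obtain ⟨n', hn', h'⟩ := ih (k + b) (by omega)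
    refine ⟨n', hn', Thm.trans ?_ h'⟩
    simpa only [iterate_add_apply] using h.iterate_unary k

abbrev Sig.Const (S : Sig) : Type := {c : S.Op // S.arity c = 0}

def Sig.Const.term (c : S.Const) : Tm S := constTm S c.1 c.2

lemma Tm.height_iterate_unary_term {f : S.Op} (hf : S.arity f = 1) (c : S.Const) (n : ℕ) :
    ((Tm.unary f)^[n] c.term).height = n := by
  induction n with
  | zero =>
    have : IsEmpty (Fin (S.arity c.1)) := by rw [c.2]; infer_instance
    simp [Sig.Const.term, constTm, Tm.height]
  | succ n ih =>
    have : Nonempty (Fin (S.arity f)) := ⟨⟨0, by omega⟩⟩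
    rw [iterate_succ_apply', Tm.unary, Tm.height, Finset.sup_const Finset.univ_nonempty, ih]

lemma Tm.exists_eq_iterate_unary {f : S.Op} (h01 : ∀ g : S.Op, S.arity g = 0 ∨ S.arity g = 1)
    (huniq : ∀ g : S.Op, S.arity g = 1 → g = f) (t : Tm S) :
    ∃ (c : S.Const) (n : ℕ), t = (Tm.unary f)^[n] c.term := by
  induction t with
  | node g a ih =>
    rcases h01 g with h | h
    · exact ⟨⟨g, h⟩, 0, congrArg (Tm.node g) (funext fun i => absurd i.isLt (by omega))⟩
    · obtain rfl := huniq g h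
      obtain ⟨c, n, hn⟩ := ih ⟨0, by omega⟩
      refine ⟨c, n + 1, ?_⟩
      rw [iterate_succ_apply', ← hn]
      exact congrArg (Tm.node g) (funext fun i => congrArg a (Fin.ext (by omega)))

section Unary

variable {A : Alg S} {f : S.Op} {N : ℕ}

lemma Thm.eval_eq_of_validEqs {p q : Tm S} (h : Thm (validEqs A N) p q) :
    p.eval A = q.eval A :=
  h.eval_eq fun _ he => he.2.2

lemma thm_validEqs_of_lt (hf : S.arity f = 1) {c d : S.Const} {i j : ℕ} (hi : i < N) (hj : j < N)
    (h : ((Tm.unary f)^[i] c.term).eval A = ((Tm.unary f)^[j] d.term).eval A) :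
    Thm (validEqs A N) ((Tm.unary f)^[i] c.term) ((Tm.unary f)^[j] d.term) :=
  Thm.ax ⟨by rwa [Tm.height_iterate_unary_term hf], by rwa [Tm.height_iterate_unary_term hf], h⟩

lemma thm_validEqs_of_injective (hf : S.arity f = 1) {c d : S.Const}
    (hc : Injective fun n => ((Tm.unary f)^[n] c.term).eval A)
    (hcd : ∃ a < N, ∃ b < N,
      ((Tm.unary f)^[a] c.term).eval A = ((Tm.unary f)^[b] d.term).eval A)
    {i j : ℕ} (h : ((Tm.unary f)^[i] c.term).eval A = ((Tm.unary f)^[j] d.term).eval A) :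
    Thm (validEqs A N) ((Tm.unary f)^[i] c.term) ((Tm.unary f)^[j] d.term) := by
  obtain ⟨a, ha, b, hb, hab⟩ := hcd
  -- an injective orbit meets the orbit of `d` along a single diagonal
  have hdiag : a + j = i + b := by
    simp only [Tm.eval_iterate_unary] at hc hab h
    exact add_eq_add_of_iterate_eq hc hab h
  by_cases hai : a ≤ i
  · obtain ⟨k, rfl, rfl⟩ : ∃ k, i = k + a ∧ j = k + b := ⟨i - a, by omega, by omega⟩
    simpa only [iterate_add_apply] using (thm_validEqs_of_lt hf ha hb hab).iterate_unary k
  · exact thm_validEqs_of_lt hf (by omega) (by omega) h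

lemma thm_validEqs_of_periodic (hf : S.arity f = 1) {c d : S.Const}
    (hc : ∃ a < N, ∃ b < a,
      ((Tm.unary f)^[a] c.term).eval A = ((Tm.unary f)^[b] c.term).eval A)
    (hd : ∃ a < N, ∃ b < a,
      ((Tm.unary f)^[a] d.term).eval A = ((Tm.unary f)^[b] d.term).eval A)
    {i j : ℕ} (h : ((Tm.unary f)^[i] c.term).eval A = ((Tm.unary f)^[j] d.term).eval A) :
    Thm (validEqs A N) ((Tm.unary f)^[i] c.term) ((Tm.unary f)^[j] d.term) := by
  obtain ⟨a, ha, b, hba, hab⟩ := hc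
  obtain ⟨a', ha', b', hba', hab'⟩ := hd
  obtain ⟨i', hi', hii'⟩ :=
    (thm_validEqs_of_lt hf ha (hba.trans ha) hab).exists_iterate_unary_lt hba i
  obtain ⟨j', hj', hjj'⟩ :=
    (thm_validEqs_of_lt hf ha' (hba'.trans ha') hab').exists_iterate_unary_lt hba' j
  -- fold both orbits back below `N`, where the equation is an axiom
  refine hii'.trans (Thm.trans ?_ hjj'.symm)
  refine thm_validEqs_of_lt hf (hi'.trans ha) (hj'.trans ha') ?_
  rw [← hii'.eval_eq_of_validEqs, ← hjj'.eval_eq_of_validEqs, h]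

end Unary

theorem exists_thm_validEqs_iff [Finite S.Op] {f : S.Op}
    (h01 : ∀ g : S.Op, S.arity g = 0 ∨ S.arity g = 1) (hf : S.arity f = 1)
    (huniq : ∀ g : S.Op, S.arity g = 1 → g = f) (A : Alg S) :
    ∃ N, ∀ p q : Tm S, Thm (validEqs A N) p q ↔ p.eval A = q.eval A := by
  let x (c : S.Const) (n : ℕ) : A.carrier := ((Tm.unary f)^[n] c.term).eval A
  obtain ⟨N₁, hmeet⟩ := exists_witness_bound_of_finite fun cd : S.Const × S.Const => fun a b =>
    x cd.1 a = x cd.2 b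
  obtain ⟨N₂, hperiod⟩ := exists_witness_bound_of_finite fun c a b => b < a ∧ x c a = x c b
  have meet : ∀ c d i j, x c i = x d j → ∃ a < N₁ + N₂, ∃ b < N₁ + N₂, x c a = x d b := by
    intro c d i j h
    obtain ⟨a, ha, b, hb, hab⟩ := hmeet (c, d) i j h
    exact ⟨a, by omega, b, by omega, hab⟩
  have period : ∀ c, ¬ Injective (x c) → ∃ a < N₁ + N₂, ∃ b < a, x c a = x c b := by
    intro c hc
    obtain ⟨a, b, hab, hne⟩ := not_injective_iff.1 hc
    obtain ⟨a, ha, b, -, hba, hab⟩ := hne.lt_or_gt.elim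
      (fun h => hperiod c b a ⟨h, hab.symm⟩) (fun h => hperiod c a b ⟨h, hab⟩)
    exact ⟨a, by omega, b, hba, hab⟩
  refine ⟨N₁ + N₂, fun p q => ⟨Thm.eval_eq_of_validEqs, fun h => ?_⟩⟩
  obtain ⟨c, i, rfl⟩ := Tm.exists_eq_iterate_unary h01 huniq p
  obtain ⟨d, j, rfl⟩ := Tm.exists_eq_iterate_unary h01 huniq q
  by_cases hc : Injective (x c)
  · exact thm_validEqs_of_injective hf hc (meet c d i j h) h
  by_cases hd : Injective (x d)
  · exact (thm_validEqs_of_injective hf hd (meet d c j i h.symm) h.symm).symm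
  exact thm_validEqs_of_periodic hf (period c hc) (period d hd) h

theorem stmt19_general (S : Sig) [Fintype S.Op]
    (h01 : ∀ f : S.Op, S.arity f = 0 ∨ S.arity f = 1)
    (hone : ∃! f : S.Op, S.arity f = 1)
    (A : Alg S) (hA : GeneratedAlg A) :
    ∃ Γ : Set (TmV S × TmV S), Γ.Finite ∧ AlgIso A (FGamma (GroundInstances Γ)) := by
  obtain ⟨f, hf, huniq⟩ := hone
  obtain ⟨N, hN⟩ := exists_thm_validEqs_iff h01 hf huniq A
  refine ⟨Prod.map Tm.toTmV Tm.toTmV '' validEqs A N, (validEqs_finite A N).image _, ?_⟩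
  rw [groundInstances_image_toTmV]
  exact algIso_fGamma hA hN

/-- If `Σ` consists of a single unary function symbol together with
finitely many constants, then every algebra over `Σ` generated by its constants is
initial, i.e., isomorphic to `F_Γ` for some finite set `Γ` of (possibly non-ground)
equations. -/
theorem stmt19 (S : Sig) [Fintype S.Op]
    (h01 : ∀ f : S.Op, S.arity f = 0 ∨ S.arity f = 1)
    (hone : ∃! f : S.Op, S.arity f = 1)
    (hc : ∃ c : S.Op, S.arity c = 0)
    (A : Alg S) (hA : GeneratedAlg A) :
    ∃ Γ : Set (TmV S × TmV S), Γ.Finite ∧ AlgIso A (FGamma (GroundInstances Γ)) :=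
  stmt19_general S h01 hone A hA

end AFA
end
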